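/- arXiv:2301.09130 — 2 statements merged into one kernel-verified Lean document; each statement's English description precedes it below -/
import Mathlib

section
/- Let μ ∈ ℝ and v ≥ 0. Then ∫ cos x · sin x d(gaussianReal μ v)(x) = exp(−2v) · sin(2μ) / 2. -/
/-! Since `cos x * sin x = sin (2x) / 2 = Im (exp (2ix)) / 2`, the integral is half the imaginary
part of the characteristic function `exp (iμt - vt²/2)` of `gaussianReal μ v` at `t = 2`. -/

open MeasureTheory ProbabilityTheory Real NNReal

lemma integral_sin_mul_eq_im_charFun (μ : Measure ℝ) [IsFiniteMeasure μ] (t : ℝ) :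
    ∫ x, sin (t * x) ∂μ = (charFun μ t).im := by
  have hint : Integrable (fun x : ℝ ↦ Complex.exp (t * x * Complex.I)) μ :=
    Integrable.of_bound (by fun_prop) 1 (ae_of_all _ fun x ↦ by
      rw [← Complex.ofReal_mul, Complex.norm_exp_ofReal_mul_I])
  rw [charFun_apply_real]
  refine Eq.trans ?_ (integral_im hint)
  simp_rw [← Complex.ofReal_mul, RCLike.im_to_complex, Complex.exp_ofReal_mul_I_im]

lemma integral_sin_mul_gaussianReal (μ : ℝ) (v : ℝ≥0) (t : ℝ) :
    ∫ x, sin (t * x) ∂gaussianReal μ v = exp (-(v * t ^ 2 / 2)) * sin (t * μ) := by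
  rw [integral_sin_mul_eq_im_charFun, charFun_gaussianReal, Complex.exp_im]
  simp [← Complex.ofReal_pow]

theorem gaussian_integral_cos_mul_sin (μ : ℝ) (v : ℝ≥0) :
    ∫ x, Real.cos x * Real.sin x ∂(gaussianReal μ v) =
      Real.exp (-2 * (v : ℝ)) * Real.sin (2 * μ) / 2 := by
  have h_cos_mul_sin (x : ℝ) : cos x * sin x = sin (2 * x) / 2 := by rw [sin_two_mul]; ring
  simp_rw [h_cos_mul_sin]
  rw [integral_div, integral_sin_mul_gaussianReal]
  ring_nf
end

section
/- Let μ_x, μ_θ, ρ ∈ ℝ and σ_x², σ_θ² > 0 with σ_x² σ_θ² − ρ² > 0, and let p(x, θ) = (2π √(σ_x² σ_θ² − ρ²))^{−1} exp(−½ (x − μ_x, θ − μ_θ) Σ^{−1} (x − μ_x, θ − μ_θ)ᵀ) be the joint Gaussian density on ℝ² with covariance matrix Σ = [[σ_x², ρ], [ρ, σ_θ²]]. Then ∫∫_{ℝ²} x · sin θ · p(x, θ) dx dθ = exp(−σ_θ²/2) · (μ_x · sin μ_θ + ρ · cos μ_θ). -/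
/-!
Completing the square in the exponent factors the joint density as the `N(mθ, sθ)` density of
`θ` times the `N(mx + ρ / sθ * (θ - mθ), (sx * sθ - ρ ^ 2) / sθ)` density of `x` given `θ`.
The inner integral is therefore the conditional mean, which is affine in `θ`, and the outer
integral of `sin θ` against an affine function of `θ` is the imaginary part of
`∫ (a + k (θ - mθ)) e^{zθ}` at `z = I`. That integral is read off from the Gaussian complex
moment generating function `exp (z mθ + sθ z² / 2)` and its derivative `∫ θ e^{zθ}`.
-/

open MeasureTheory
open scoped NNReal

namespace ProbabilityTheory

open Complex

lemma integral_gaussianPDFReal_mul_id (μ : ℝ) {v : ℝ≥0} (hv : v ≠ 0) :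
    ∫ x, gaussianPDFReal μ v x * x = μ := by
  simpa [integral_gaussianReal_eq_integral_smul hv] using integral_id_gaussianReal (μ := μ) (v := v)

variable (μ : ℝ) (v : ℝ≥0) (z : ℂ)

lemma re_mem_interior_integrableExpSet_id_gaussianReal :
    z.re ∈ interior (integrableExpSet id (gaussianReal μ v)) := by
  simp [integrableExpSet_id_gaussianReal]

lemma integrable_cexp_mul_gaussianReal :
    Integrable (fun x : ℝ ↦ cexp (z * x)) (gaussianReal μ v) :=
  integrable_cexp_mul_of_re_mem_interior_integrableExpSet
    (re_mem_interior_integrableExpSet_id_gaussianReal μ v z)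

lemma integrable_mul_cexp_mul_gaussianReal :
    Integrable (fun x : ℝ ↦ x * cexp (z * x)) (gaussianReal μ v) := by
  simpa using integrable_pow_mul_cexp_of_re_mem_interior_integrableExpSet
    (re_mem_interior_integrableExpSet_id_gaussianReal μ v z) 1

lemma integral_cexp_mul_gaussianReal :
    ∫ x, cexp (z * x) ∂gaussianReal μ v = cexp (z * μ + v * z ^ 2 / 2) :=
  complexMGF_id_gaussianReal z

lemma integral_mul_cexp_mul_gaussianReal :
    ∫ x, x * cexp (z * x) ∂gaussianReal μ v = (μ + v * z) * cexp (z * μ + v * z ^ 2 / 2) := by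
  have hmgf := hasDerivAt_complexMGF (re_mem_interior_integrableExpSet_id_gaussianReal μ v z)
  rw [funext complexMGF_id_gaussianReal] at hmgf
  have hexp := (((hasDerivAt_id' z).mul_const (μ : ℂ)).fun_add
    (((hasDerivAt_pow 2 z).const_mul (v : ℂ)).div_const 2)).cexp
  convert hmgf.unique hexp using 1
  · simp
  · ring

variable (a k : ℝ)

lemma affine_mul_cexp_eq (x : ℝ) : (a + k * (x - μ) : ℂ) * cexp (z * x) =
    (a - k * μ) * cexp (z * x) + k * (x * cexp (z * x)) := by
  ring

lemma integrable_affine_mul_cexp_mul_gaussianReal :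
    Integrable (fun x : ℝ ↦ (a + k * (x - μ) : ℂ) * cexp (z * x)) (gaussianReal μ v) := by
  simp_rw [affine_mul_cexp_eq]
  exact ((integrable_cexp_mul_gaussianReal μ v z).const_mul _).add
    ((integrable_mul_cexp_mul_gaussianReal μ v z).const_mul _)

lemma integral_affine_mul_cexp_mul_gaussianReal :
    ∫ x, (a + k * (x - μ) : ℂ) * cexp (z * x) ∂gaussianReal μ v =
      (a + k * v * z) * cexp (z * μ + v * z ^ 2 / 2) := by
  simp_rw [affine_mul_cexp_eq]
  rw [integral_add ((integrable_cexp_mul_gaussianReal μ v z).const_mul _)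
      ((integrable_mul_cexp_mul_gaussianReal μ v z).const_mul _),
    integral_const_mul, integral_const_mul, integral_cexp_mul_gaussianReal,
    integral_mul_cexp_mul_gaussianReal]
  ring

lemma integral_sin_mul_affine_gaussianReal :
    ∫ x, Real.sin x * (a + k * (x - μ)) ∂gaussianReal μ v =
      Real.exp (-v / 2) * (a * Real.sin μ + k * v * Real.cos μ) := calc
  _ = ∫ x, ((a + k * (x - μ) : ℂ) * cexp (I * x)).im ∂gaussianReal μ v := by
    congr with x
    rw [mul_comm I, ← exp_ofReal_mul_I_im, mul_comm]
    norm_cast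
    rw [im_ofReal_mul]
  _ = (∫ x, (a + k * (x - μ) : ℂ) * cexp (I * x) ∂gaussianReal μ v).im :=
    integral_im (integrable_affine_mul_cexp_mul_gaussianReal μ v I a k)
  _ = _ := by
    rw [integral_affine_mul_cexp_mul_gaussianReal]
    simp only [I_sq, mul_neg, mul_one, mul_im, mul_re, add_re, add_im, ofReal_re, ofReal_im,
      I_re, I_im, exp_re, exp_im, neg_re, neg_im, div_ofNat_re, div_ofNat_im, mul_zero, zero_mul,
      sub_zero, add_zero, zero_add, one_mul, sub_self, neg_zero, zero_div]
    ring

end ProbabilityTheory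

open ProbabilityTheory Real Matrix

lemma dotProduct_inv_fin_two_mulVec {a b c : ℝ} (hc : c ≠ 0) (hdet : a * c - b ^ 2 ≠ 0)
    (u w : ℝ) :
    ![u, w] ⬝ᵥ (!![a, b; b, c])⁻¹ *ᵥ ![u, w] =
      (u - b / c * w) ^ 2 / ((a * c - b ^ 2) / c) + w ^ 2 / c := by
  rw [inv_def, det_fin_two_of, adjugate_fin_two_of, Ring.inverse_eq_inv']
  simp only [dotProduct, mulVec, Fin.sum_univ_two, Matrix.smul_apply, of_apply, cons_val',
    cons_val_fin_one, cons_val_zero, cons_val_one, smul_eq_mul]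
  field_simp
  ring

lemma sqrt_two_pi_mul_sqrt_two_pi {s t : ℝ} (hs : 0 ≤ s) :
    √(2 * π * s) * √(2 * π * t) = 2 * π * √(s * t) := by
  rw [← sqrt_mul (by positivity), show 2 * π * s * (2 * π * t) = (2 * π) ^ 2 * (s * t) by ring,
    sqrt_mul (by positivity), sqrt_sq (by positivity)]

lemma bivariate_gaussian_density_eq_mul_gaussianPDFReal {sx sθ ρ : ℝ} (hsθ : 0 < sθ)
    (hdet : 0 < sx * sθ - ρ ^ 2) (mx mθ x θ : ℝ) :
    (2 * π * √(sx * sθ - ρ ^ 2))⁻¹ * rexp (-(1 / 2) *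
        (![x - mx, θ - mθ] ⬝ᵥ (!![sx, ρ; ρ, sθ] : Matrix (Fin 2) (Fin 2) ℝ)⁻¹ *ᵥ
          ![x - mx, θ - mθ])) =
      gaussianPDFReal mθ sθ.toNNReal θ *
        gaussianPDFReal (mx + ρ / sθ * (θ - mθ)) ((sx * sθ - ρ ^ 2) / sθ).toNNReal x := by
  rw [dotProduct_inv_fin_two_mulVec hsθ.ne' hdet.ne']
  simp only [gaussianPDFReal, Real.coe_toNNReal _ hsθ.le, Real.coe_toNNReal _ (div_pos hdet hsθ).le]
  rw [mul_mul_mul_comm, ← mul_inv, sqrt_two_pi_mul_sqrt_two_pi hsθ.le, ← exp_add,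
    mul_div_cancel₀ _ hsθ.ne']
  congr 2
  field_simp
  ring

theorem integral_mul_sin_bivariate_gaussian_general
    (mx mθ ρ sx sθ : ℝ) (hsθ : 0 < sθ) (hdet : 0 < sx * sθ - ρ ^ 2)
    (p : ℝ → ℝ → ℝ)
    (hp : ∀ x θ : ℝ, p x θ =
      (2 * π * Real.sqrt (sx * sθ - ρ ^ 2))⁻¹ *
        Real.exp (-(1 / 2) *
          (![x - mx, θ - mθ] ⬝ᵥ (!![sx, ρ; ρ, sθ] : Matrix (Fin 2) (Fin 2) ℝ)⁻¹.mulVec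
            ![x - mx, θ - mθ]))) :
    ∫ θ : ℝ, ∫ x : ℝ, x * Real.sin θ * p x θ =
      Real.exp (-sθ / 2) * (mx * Real.sin mθ + ρ * Real.cos mθ) := by
  set v := ((sx * sθ - ρ ^ 2) / sθ).toNNReal
  have hsθ' : sθ.toNNReal ≠ 0 := by simpa using hsθ
  have hv : v ≠ 0 := by simpa [v] using div_pos hdet hsθ
  calc ∫ θ, ∫ x, x * Real.sin θ * p x θ
    _ = ∫ θ, gaussianPDFReal mθ sθ.toNNReal θ * (Real.sin θ * (mx + ρ / sθ * (θ - mθ))) := by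
      congr with θ
      set M := mx + ρ / sθ * (θ - mθ)
      simp_rw [hp, bivariate_gaussian_density_eq_mul_gaussianPDFReal hsθ hdet]
      calc ∫ x, x * Real.sin θ * (gaussianPDFReal mθ sθ.toNNReal θ * gaussianPDFReal M v x)
        _ = gaussianPDFReal mθ sθ.toNNReal θ * Real.sin θ * ∫ x, gaussianPDFReal M v x * x := by
          rw [← integral_const_mul]
          congr with x
          ring
        _ = _ := by rw [integral_gaussianPDFReal_mul_id _ hv]; ring
    _ = ∫ θ, Real.sin θ * (mx + ρ / sθ * (θ - mθ)) ∂gaussianReal mθ sθ.toNNReal :=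
      (integral_gaussianReal_eq_integral_smul hsθ').symm
    _ = _ := by
      rw [integral_sin_mul_affine_gaussianReal, Real.coe_toNNReal _ hsθ.le,
        div_mul_cancel₀ _ hsθ.ne']

theorem integral_mul_sin_bivariate_gaussian
    (mx mθ ρ sx sθ : ℝ) (hsx : 0 < sx) (hsθ : 0 < sθ) (hdet : 0 < sx * sθ - ρ ^ 2)
    (p : ℝ → ℝ → ℝ)
    (hp : ∀ x θ : ℝ, p x θ =
      (2 * π * Real.sqrt (sx * sθ - ρ ^ 2))⁻¹ *
        Real.exp (-(1 / 2) *
          (![x - mx, θ - mθ] ⬝ᵥ (!![sx, ρ; ρ, sθ] : Matrix (Fin 2) (Fin 2) ℝ)⁻¹.mulVec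
            ![x - mx, θ - mθ]))) :
    ∫ θ : ℝ, ∫ x : ℝ, x * Real.sin θ * p x θ =
      Real.exp (-sθ / 2) * (mx * Real.sin mθ + ρ * Real.cos mθ) :=
  integral_mul_sin_bivariate_gaussian_general mx mθ ρ sx sθ hsθ hdet p hp
end
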